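/- For a connected weighted graph, λ_2(L_g) ≥ 4 / (n ∑_l R_l(g)), where the sum is of effective resistances over the edges. -/

import Mathlib

/-!
Let `v` be an eigenvector of `L` for `μ > 0`. It is orthogonal to `ker L = ℝ𝟙`, so `P L v = v`,
and Cauchy–Schwarz for the positive semidefinite form `P` gives `(v i - v j)² ≤ R i j · μ ‖v‖²`;
summing over all ordered pairs yields `2n ≤ μ ∑ᵢⱼ R i j`.

On the other hand `R` satisfies the triangle inequality: the cross term in
`R i j = R i k + R k j + 2 (eᵢ - eₖ)ᵀ P (eₖ - eⱼ)` is `ψ i - ψ k` for the potential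
`ψ = P (eₖ - eⱼ)`, which by the maximum principle is largest at `k`. Hence `R i j` is at most
the sum of `R` over the darts of a shortest `i`–`j` path. A dart `(a, b)` lies on such a path only
if `i` is closer to `a` than to `b` and `j` closer to `b` than to `a`, so at most `n² / 4` of the
chosen paths use it, and `∑ᵢⱼ R i j ≤ n² / 4 · ∑_{a ~ b} R a b`.
-/

open Matrix BigOperators

/-- `P` is the Moore–Penrose pseudoinverse of `M`. -/
def IsMoorePenrose {n : ℕ} (M P : Matrix (Fin n) (Fin n) ℝ) : Prop :=
  M * P * M = M ∧ P * M * P = P ∧ (M * P)ᵀ = M * P ∧ (P * M)ᵀ = P * M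

open Finset

namespace SimpleGraph

variable {V : Type*} {G : SimpleGraph V}

theorem Walk.dist_add_one_add_dist_of_mem_darts (hG : G.Connected) {i j : V} (p : G.Walk i j)
    (hp : p.length = G.dist i j) {d : G.Dart} (hd : d ∈ p.darts) :
    G.dist i d.fst + 1 + G.dist d.snd j = G.dist i j := by
  induction p with
  | nil => simp at hd
  | @cons i c j h q ih =>
    have hic : G.dist i c = 1 := dist_eq_one_iff_adj.2 h
    rw [length_cons] at hp
    have hq : q.length = G.dist c j := by
      have := dist_le q
      have := hG.dist_triangle (u := i) (v := c) (w := j)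
      omega
    rw [darts_cons, List.mem_cons] at hd
    rcases hd with rfl | hd
    · simp only [dist_self]
      omega
    · have := ih hq hd
      have := hG.dist_triangle (u := i) (v := c) (w := d.fst)
      have := hG.dist_triangle (u := i) (v := d.fst) (w := j)
      have := hG.dist_triangle (u := d.fst) (v := d.snd) (w := j)
      have := dist_eq_one_iff_adj.2 d.adj
      omega

theorem Walk.le_sum_darts {M : Type*} [AddCommMonoid M] [PartialOrder M] [IsOrderedAddMonoid M]
    {r : V → V → M} (hr : ∀ i, r i i = 0) (htri : ∀ i j k, r i k ≤ r i j + r j k) {i j : V}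
    (p : G.Walk i j) : r i j ≤ (p.darts.map fun d => r d.fst d.snd).sum := by
  induction p with
  | nil => simp [hr]
  | cons h q ih =>
    rw [darts_cons, List.map_cons, List.sum_cons]
    exact (htri _ _ _).trans (add_le_add_right ih _)

theorem Connected.four_mul_card_mem_darts_le [Fintype V] [DecidableEq V] (hG : G.Connected)
    {p : ∀ i j, G.Walk i j} (hp : ∀ i j, (p i j).length = G.dist i j) (d : G.Dart) :
    4 * #{ij : V × V | d ∈ (p ij.1 ij.2).darts} ≤ Fintype.card V ^ 2 := by
  set A : Finset V := {x | G.dist x d.fst < G.dist x d.snd}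
  set B : Finset V := {x | G.dist x d.snd < G.dist x d.fst}
  have hsub : ({ij : V × V | d ∈ (p ij.1 ij.2).darts} : Finset (V × V)) ⊆ A ×ˢ B := by
    rintro ⟨i, j⟩ hij
    rw [mem_filter] at hij
    have := (p i j).dist_add_one_add_dist_of_mem_darts hG (hp i j) hij.2
    have := hG.dist_triangle (u := i) (v := d.snd) (w := j)
    have := hG.dist_triangle (u := i) (v := d.fst) (w := j)
    simp only [A, B, mem_product, mem_filter, mem_univ, true_and, dist_comm (u := j)]
    omega
  have hAB : #A + #B ≤ Fintype.card V := by
    rw [← card_union_of_disjoint (disjoint_filter.2 fun x _ h => h.not_gt)]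
    exact card_le_univ _
  calc 4 * #{ij : V × V | d ∈ (p ij.1 ij.2).darts} ≤ 4 * (#A * #B) := by
        gcongr; exact (card_le_card hsub).trans_eq (card_product A B)
    _ ≤ (#A + #B) ^ 2 := by rw [← mul_assoc]; exact four_mul_le_sq_add _ _
    _ ≤ Fintype.card V ^ 2 := by gcongr

theorem sum_dart_eq_sum_sum_ite_adj [Fintype V] [DecidableRel G.Adj] {M : Type*}
    [AddCommMonoid M] (f : V → V → M) :
    ∑ d : G.Dart, f d.fst d.snd = ∑ i, ∑ j, if G.Adj i j then f i j else 0 := by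
  rw [← Fintype.sum_prod_type', ← sum_filter]
  refine sum_bij (fun d _ => d.toProd) (fun d _ => by simp) (fun d _ d' _ h => Dart.ext _ _ h)
    (fun q hq => ⟨⟨q, (mem_filter.1 hq).2⟩, mem_univ _, rfl⟩) (fun d _ => rfl)

theorem Connected.sum_sum_le_card_sq_div_four_mul [Fintype V] [DecidableRel G.Adj]
    (hG : G.Connected) {r : V → V → ℝ} (hr0 : ∀ i j, 0 ≤ r i j) (hr : ∀ i, r i i = 0)
    (htri : ∀ i j k, r i k ≤ r i j + r j k) :
    ∑ i, ∑ j, r i j ≤ Fintype.card V ^ 2 / 4 * ∑ i, ∑ j, if G.Adj i j then r i j else 0 := by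
  classical
  choose p hp using hG.exists_walk_length_eq_dist
  have hpath (i j : V) :
      r i j ≤ ∑ d : G.Dart, if d ∈ (p i j).darts then r d.fst d.snd else 0 := by
    have hnodup := Walk.darts_nodup_of_support_nodup
      ((p i j).isPath_of_length_eq_dist (hp i j)).support_nodup
    calc r i j ≤ ((p i j).darts.map fun d => r d.fst d.snd).sum := (p i j).le_sum_darts hr htri
      _ = ∑ d ∈ (p i j).darts.toFinset, r d.fst d.snd := (List.sum_toFinset _ hnodup).symm
      _ = _ := by simp_rw [← List.mem_toFinset]; rw [sum_ite_mem, univ_inter]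
  calc ∑ i, ∑ j, r i j
      ≤ ∑ i, ∑ j, ∑ d : G.Dart, if d ∈ (p i j).darts then r d.fst d.snd else 0 := by
        gcongr with i _ j _; exact hpath i j
    _ = ∑ d : G.Dart, #{ij : V × V | d ∈ (p ij.1 ij.2).darts} * r d.fst d.snd := by
        rw [← Fintype.sum_prod_type', sum_comm]
        simp_rw [← sum_filter, sum_const, nsmul_eq_mul]
    _ ≤ ∑ d : G.Dart, Fintype.card V ^ 2 / 4 * r d.fst d.snd := by
        gcongr with d
        · exact hr0 _ _
        · rw [le_div_iff₀' four_pos]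
          exact_mod_cast hG.four_mul_card_mem_darts_le hp d
    _ = _ := by rw [← mul_sum, sum_dart_eq_sum_sum_ite_adj]

end SimpleGraph

variable {V : Type*} [Fintype V]

theorem sum_sum_sq_sub_eq {v : V → ℝ} (hv : ∑ i, v i = 0) :
    ∑ i, ∑ j, (v i - v j) ^ 2 = 2 * Fintype.card V * (v ⬝ᵥ v) := by
  simp only [sub_sq, sum_add_distrib, sum_sub_distrib, ← mul_sum, ← sum_mul, hv, sum_const,
    card_univ, nsmul_eq_mul, dotProduct, ← sq]
  ring

theorem Matrix.IsSymm.dotProduct_eq_zero_of_mulVec_eq_smul {M : Matrix V V ℝ} (hM : M.IsSymm)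
    {z v : V → ℝ} {μ : ℝ} (hz : M *ᵥ z = 0) (hv : M *ᵥ v = μ • v) (hμ : μ ≠ 0) :
    z ⬝ᵥ v = 0 := by
  have : μ * (z ⬝ᵥ v) = 0 := by
    rw [← smul_eq_mul, ← dotProduct_smul, ← hv, dotProduct_mulVec, ← mulVec_transpose, hM.eq, hz,
      zero_dotProduct]
  exact (mul_eq_zero.1 this).resolve_left hμ

theorem Matrix.IsSymm.sq_dotProduct_mulVec_le [DecidableEq V] {P : Matrix V V ℝ} (hP : P.IsSymm)
    (hPnonneg : ∀ x, 0 ≤ x ⬝ᵥ P *ᵥ x) (a b : V → ℝ) :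
    (a ⬝ᵥ P *ᵥ b) ^ 2 ≤ (a ⬝ᵥ P *ᵥ a) * (b ⬝ᵥ P *ᵥ b) := by
  simpa only [toBilin'_apply'] using (toBilin' P).apply_sq_le_of_symm
    (by simpa only [toBilin'_apply'] using hPnonneg)
    (LinearMap.BilinForm.isSymm_iff.1 (isSymm_toBilin'_iff_isSymm.2 hP)) a b

section WeightedLaplacian

variable [DecidableEq V] {W : Matrix V V ℝ}

def weightedLaplacian (W : Matrix V V ℝ) : Matrix V V ℝ :=
  Matrix.of fun i j => if i = j then ∑ k, W i k else -W i j

theorem isSymm_weightedLaplacian (hW : W.IsSymm) : (weightedLaplacian W).IsSymm := by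
  ext i j
  by_cases h : i = j
  · simp [weightedLaplacian, h]
  · simp [weightedLaplacian, h, Ne.symm h, hW.apply i j]

theorem weightedLaplacian_mulVec_apply (hW : ∀ i, W i i = 0) (x : V → ℝ) (i : V) :
    (weightedLaplacian W *ᵥ x) i = ∑ j, W i j * (x i - x j) := by
  have (j : V) : weightedLaplacian W i j * x j
      = (if i = j then (∑ k, W i k) * x i else 0) - W i j * x j := by
    by_cases h : i = j <;> simp [weightedLaplacian, h, hW]
  simp only [mulVec, dotProduct, this, sum_sub_distrib, sum_ite_eq, mem_univ, if_true, sum_mul,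
    mul_sub]

theorem weightedLaplacian_mulVec_one (hW : ∀ i, W i i = 0) : weightedLaplacian W *ᵥ 1 = 0 := by
  ext i
  simp [weightedLaplacian_mulVec_apply hW]

theorem dotProduct_weightedLaplacian_mulVec (hWs : W.IsSymm) (hW : ∀ i, W i i = 0) (x : V → ℝ) :
    x ⬝ᵥ weightedLaplacian W *ᵥ x = (∑ i, ∑ j, W i j * (x i - x j) ^ 2) / 2 := by
  have hswap : ∑ i, ∑ j, W i j * (x i * (x i - x j)) = ∑ i, ∑ j, W i j * (x j * (x j - x i)) := by
    rw [sum_comm]; simp_rw [hWs.apply]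
  have : x ⬝ᵥ weightedLaplacian W *ᵥ x = ∑ i, ∑ j, W i j * (x i * (x i - x j)) := by
    simp only [dotProduct, weightedLaplacian_mulVec_apply hW, mul_sum]
    exact sum_congr rfl fun i _ => sum_congr rfl fun j _ => by ring
  rw [this, eq_div_iff two_ne_zero, mul_two]
  nth_rw 2 [hswap]
  simp only [← sum_add_distrib]
  exact sum_congr rfl fun i _ => sum_congr rfl fun j _ => by ring

theorem dotProduct_weightedLaplacian_mulVec_nonneg (hWs : W.IsSymm) (hW : ∀ i, W i i = 0)
    (hW0 : ∀ i j, 0 ≤ W i j) (x : V → ℝ) : 0 ≤ x ⬝ᵥ weightedLaplacian W *ᵥ x := by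
  rw [dotProduct_weightedLaplacian_mulVec hWs hW]
  exact div_nonneg (sum_nonneg fun i _ => sum_nonneg fun j _ =>
    mul_nonneg (hW0 i j) (sq_nonneg _)) zero_le_two

theorem apply_eq_of_forall_le_of_weightedLaplacian_mulVec_nonpos (hW : ∀ i, W i i = 0)
    (hW0 : ∀ i j, 0 ≤ W i j) {ψ : V → ℝ} {u y : V} (hmax : ∀ x, ψ x ≤ ψ u)
    (hu : (weightedLaplacian W *ᵥ ψ) u ≤ 0) (huy : 0 < W u y) : ψ y = ψ u := by
  rw [weightedLaplacian_mulVec_apply hW] at hu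
  have hterm : ∀ j ∈ univ, 0 ≤ W u j * (ψ u - ψ j) :=
    fun j _ => mul_nonneg (hW0 u j) (sub_nonneg.2 (hmax j))
  have := (sum_eq_zero_iff_of_nonneg hterm).1 (hu.antisymm (sum_nonneg hterm)) y (mem_univ y)
  linarith [(mul_eq_zero.1 this).resolve_left huy.ne']

theorem le_of_weightedLaplacian_mulVec_nonpos {G : SimpleGraph V} (hG : G.Connected)
    (hadj : ∀ i j, G.Adj i j → 0 < W i j) (hW : ∀ i, W i i = 0) (hW0 : ∀ i j, 0 ≤ W i j)
    {ψ : V → ℝ} {k : V} (hψ : ∀ x, x ≠ k → (weightedLaplacian W *ᵥ ψ) x ≤ 0) (x : V) :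
    ψ x ≤ ψ k := by
  obtain ⟨m, -, hm⟩ := exists_max_image univ ψ ⟨k, mem_univ k⟩
  suffices h : ∀ u v, G.Walk u v → v = k → ψ u = ψ m → ψ k = ψ m from
    h m k (hG.preconnected m k).some rfl rfl ▸ hm x (mem_univ x)
  intro u v w hv hu
  induction w with
  | nil => exact hv ▸ hu
  | @cons u c _ h _ ih =>
    by_cases huk : u = k
    · exact huk ▸ hu
    · have hmax (y : V) : ψ y ≤ ψ u := hu ▸ hm y (mem_univ y)
      exact ih hv ((apply_eq_of_forall_le_of_weightedLaplacian_mulVec_nonpos hW hW0 hmax (hψ u huk)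
        (hadj u c h)).trans hu)

theorem eq_of_weightedLaplacian_mulVec_eq_zero {G : SimpleGraph V} (hG : G.Connected)
    (hadj : ∀ i j, G.Adj i j → 0 < W i j) (hW : ∀ i, W i i = 0) (hW0 : ∀ i j, 0 ≤ W i j)
    {z : V → ℝ} (hz : weightedLaplacian W *ᵥ z = 0) (i j : V) : z i = z j :=
  have hz' (k x : V) : z x ≤ z k :=
    le_of_weightedLaplacian_mulVec_nonpos hG hadj hW hW0 (fun y _ => by simp [hz]) x
  (hz' j i).antisymm (hz' i j)

theorem dotProduct_eq_zero_of_weightedLaplacian_mulVec_eq_zero {G : SimpleGraph V}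
    (hG : G.Connected) (hadj : ∀ i j, G.Adj i j → 0 < W i j) (hW : ∀ i, W i i = 0)
    (hW0 : ∀ i j, 0 ≤ W i j) {z x : V → ℝ} (hz : weightedLaplacian W *ᵥ z = 0)
    (hx : ∑ i, x i = 0) : z ⬝ᵥ x = 0 := by
  rcases isEmpty_or_nonempty V with hV | ⟨⟨i⟩⟩
  · simp [dotProduct]
  · calc z ⬝ᵥ x = ∑ j, z i * x j := sum_congr rfl fun j _ => by
          rw [eq_of_weightedLaplacian_mulVec_eq_zero hG hadj hW hW0 hz j i]
      _ = 0 := by rw [← mul_sum, hx, mul_zero]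

end WeightedLaplacian

namespace IsMoorePenrose

variable {n : ℕ} {M P Q : Matrix (Fin n) (Fin n) ℝ}

theorem unique (hP : IsMoorePenrose M P) (hQ : IsMoorePenrose M Q) : P = Q := by
  obtain ⟨hP₁, hP₂, hP₃, hP₄⟩ := hP
  obtain ⟨hQ₁, hQ₂, hQ₃, hQ₄⟩ := hQ
  have hMP : M * P = M * Q := by
    calc M * P = (M * Q * (M * P))ᵀ := by rw [← Matrix.mul_assoc, hQ₁, hP₃]
      _ = M * P * (M * Q) := by rw [transpose_mul, hP₃, hQ₃]
      _ = M * Q := by rw [← Matrix.mul_assoc, hP₁]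
  have hPM : P * M = Q * M := by
    calc P * M = (P * M * (Q * M))ᵀ := by
          rw [Matrix.mul_assoc, ← Matrix.mul_assoc M Q M, hQ₁, hP₄]
      _ = Q * M * (P * M) := by rw [transpose_mul, hP₄, hQ₄]
      _ = Q * M := by rw [Matrix.mul_assoc, ← Matrix.mul_assoc M P M, hP₁]
  calc P = P * M * P := hP₂.symm
    _ = Q * M * Q := by rw [hPM, Matrix.mul_assoc, hMP, ← Matrix.mul_assoc]
    _ = Q := hQ₂

theorem transpose (hP : IsMoorePenrose M P) : IsMoorePenrose Mᵀ Pᵀ := by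
  obtain ⟨h₁, h₂, h₃, h₄⟩ := hP
  refine ⟨?_, ?_, ?_, ?_⟩
  · rw [← transpose_mul, ← transpose_mul, ← Matrix.mul_assoc, h₁]
  · rw [← transpose_mul, ← transpose_mul, ← Matrix.mul_assoc, h₂]
  · rw [← transpose_mul, h₄, h₄]
  · rw [← transpose_mul, h₃, h₃]

theorem isSymm (hM : M.IsSymm) (hP : IsMoorePenrose M P) : P.IsSymm :=
  (hP.unique (hM.eq ▸ hP.transpose)).symm

theorem commute (hM : M.IsSymm) (hP : IsMoorePenrose M P) : M * P = P * M := by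
  rw [← hP.2.2.1, transpose_mul, (hP.isSymm hM).eq, hM.eq]

theorem dotProduct_mulVec_nonneg (hM : M.IsSymm) (hMnonneg : ∀ x, 0 ≤ x ⬝ᵥ M *ᵥ x)
    (hP : IsMoorePenrose M P) (x : Fin n → ℝ) : 0 ≤ x ⬝ᵥ P *ᵥ x := by
  rw [← hP.2.1, ← mulVec_mulVec, ← mulVec_mulVec, dotProduct_mulVec, ← mulVec_transpose,
    (hP.isSymm hM).eq]
  exact hMnonneg _

theorem mulVec_mulVec_eq_self (hP : IsMoorePenrose M P) {x : Fin n → ℝ}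
    (hx : ∀ z, M *ᵥ z = 0 → z ⬝ᵥ x = 0) : P *ᵥ (M *ᵥ x) = x := by
  -- `y` lies in `ker M`, and is orthogonal to it since `(P * M)ᵀ = P * M` kills `ker M`.
  set y := x - P *ᵥ (M *ᵥ x)
  have hMy : M *ᵥ y = 0 := by
    rw [mulVec_sub, mulVec_mulVec, mulVec_mulVec, hP.1, sub_self]
  have hy : y ⬝ᵥ y = 0 := by
    rw [dotProduct_sub y x, hx y hMy, mulVec_mulVec, dotProduct_mulVec, ← mulVec_transpose,
      hP.2.2.2, ← mulVec_mulVec, hMy, mulVec_zero, zero_dotProduct, sub_zero]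
  exact (sub_eq_zero.1 (dotProduct_self_eq_zero.1 hy)).symm

end IsMoorePenrose

section EffectiveResistance

variable [DecidableEq V]

def effectiveResistance (P : Matrix V V ℝ) (i j : V) : ℝ :=
  (Pi.single i 1 - Pi.single j 1 : V → ℝ) ⬝ᵥ P *ᵥ (Pi.single i 1 - Pi.single j 1)

theorem effectiveResistance_self (P : Matrix V V ℝ) (i : V) : effectiveResistance P i i = 0 := by
  simp [effectiveResistance]

theorem effectiveResistance_le_add_of_forall_le {P : Matrix V V ℝ} (hP : P.IsSymm) {i j k : V}
    (hmax : ∀ x, (P *ᵥ (Pi.single k 1 - Pi.single j 1)) x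
      ≤ (P *ᵥ (Pi.single k 1 - Pi.single j 1)) k) :
    effectiveResistance P i j ≤ effectiveResistance P i k + effectiveResistance P k j := by
  set a : V → ℝ := Pi.single i 1 - Pi.single k 1
  set b : V → ℝ := Pi.single k 1 - Pi.single j 1
  have hab : (Pi.single i 1 - Pi.single j 1 : V → ℝ) = a + b := by simp [a, b]
  have hba : b ⬝ᵥ P *ᵥ a = a ⬝ᵥ P *ᵥ b := by
    rw [dotProduct_mulVec, ← mulVec_transpose, hP.eq, dotProduct_comm]
  have hcross : a ⬝ᵥ P *ᵥ b = (P *ᵥ b) i - (P *ᵥ b) k := by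
    simp [a, sub_dotProduct]
  have := hmax i
  unfold effectiveResistance
  rw [hab, mulVec_add, dotProduct_add, add_dotProduct, add_dotProduct, hba, hcross]
  linarith

theorem sq_sub_le_effectiveResistance_mul {M P : Matrix V V ℝ} (hP : P.IsSymm)
    (hPnonneg : ∀ x, 0 ≤ x ⬝ᵥ P *ᵥ x) {v : V → ℝ} {μ : ℝ} (hPMv : P *ᵥ (M *ᵥ v) = v)
    (hv : M *ᵥ v = μ • v) (i j : V) :
    (v i - v j) ^ 2 ≤ effectiveResistance P i j * (μ * (v ⬝ᵥ v)) := by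
  have := hP.sq_dotProduct_mulVec_le hPnonneg (Pi.single i 1 - Pi.single j 1) (M *ᵥ v)
  rwa [hPMv, sub_dotProduct, single_one_dotProduct, single_one_dotProduct, hv, smul_dotProduct,
    smul_eq_mul] at this

end EffectiveResistance

section Laplacian

variable {n : ℕ} {G : SimpleGraph (Fin n)} {W P : Matrix (Fin n) (Fin n) ℝ}

theorem IsMoorePenrose.mulVec_weightedLaplacian_mulVec (hG : G.Connected)
    (hadj : ∀ i j, G.Adj i j → 0 < W i j) (hW : ∀ i, W i i = 0) (hW0 : ∀ i j, 0 ≤ W i j)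
    (hP : IsMoorePenrose (weightedLaplacian W) P) {x : Fin n → ℝ} (hx : ∑ i, x i = 0) :
    P *ᵥ (weightedLaplacian W *ᵥ x) = x :=
  hP.mulVec_mulVec_eq_self fun _ hz ↦
    dotProduct_eq_zero_of_weightedLaplacian_mulVec_eq_zero hG hadj hW hW0 hz hx

theorem IsMoorePenrose.dotProduct_mulVec_nonneg_of_weightedLaplacian (hWs : W.IsSymm)
    (hW : ∀ i, W i i = 0) (hW0 : ∀ i j, 0 ≤ W i j) (hP : IsMoorePenrose (weightedLaplacian W) P)
    (x : Fin n → ℝ) : 0 ≤ x ⬝ᵥ P *ᵥ x :=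
  hP.dotProduct_mulVec_nonneg (isSymm_weightedLaplacian hWs)
    (dotProduct_weightedLaplacian_mulVec_nonneg hWs hW hW0) x

theorem IsMoorePenrose.effectiveResistance_le_add (hWs : W.IsSymm) (hG : G.Connected)
    (hadj : ∀ i j, G.Adj i j → 0 < W i j) (hW : ∀ i, W i i = 0) (hW0 : ∀ i j, 0 ≤ W i j)
    (hP : IsMoorePenrose (weightedLaplacian W) P) (i k j : Fin n) :
    effectiveResistance P i j ≤ effectiveResistance P i k + effectiveResistance P k j := by
  have hL := isSymm_weightedLaplacian hWs
  set b : Fin n → ℝ := Pi.single k 1 - Pi.single j 1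
  have hLPb : weightedLaplacian W *ᵥ (P *ᵥ b) = b := by
    rw [mulVec_mulVec, hP.commute hL, ← mulVec_mulVec]
    exact hP.mulVec_weightedLaplacian_mulVec hG hadj hW hW0 (by simp [b, sum_sub_distrib])
  refine effectiveResistance_le_add_of_forall_le (hP.isSymm hL)
    (le_of_weightedLaplacian_mulVec_nonpos hG hadj hW hW0 fun x hx => ?_)
  rw [hLPb]
  simp [b, Pi.single_apply, hx]
  positivity

theorem IsMoorePenrose.two_mul_le_mul_sum_effectiveResistance (hWs : W.IsSymm) (hG : G.Connected)
    (hadj : ∀ i j, G.Adj i j → 0 < W i j) (hW : ∀ i, W i i = 0) (hW0 : ∀ i j, 0 ≤ W i j)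
    (hP : IsMoorePenrose (weightedLaplacian W) P) {v : Fin n → ℝ} {μ : ℝ} (hv : v ≠ 0)
    (hLv : weightedLaplacian W *ᵥ v = μ • v) (hμ : μ ≠ 0) :
    2 * n ≤ μ * ∑ i, ∑ j, effectiveResistance P i j := by
  have hL := isSymm_weightedLaplacian hWs
  have hsum : ∑ i, v i = 0 := by
    rw [← one_dotProduct]
    exact hL.dotProduct_eq_zero_of_mulVec_eq_smul (weightedLaplacian_mulVec_one hW) hLv hμ
  have hvv : 0 < v ⬝ᵥ v := (sum_nonneg fun i _ => mul_self_nonneg (v i)).lt_of_ne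
    (Ne.symm (dotProduct_self_eq_zero.not.2 hv))
  refine le_of_mul_le_mul_right ?_ hvv
  calc 2 * n * (v ⬝ᵥ v) = ∑ i, ∑ j, (v i - v j) ^ 2 := by
        rw [sum_sum_sq_sub_eq hsum, Fintype.card_fin]
    _ ≤ ∑ i, ∑ j, effectiveResistance P i j * (μ * (v ⬝ᵥ v)) := by
        gcongr with i _ j _
        exact sq_sub_le_effectiveResistance_mul (hP.isSymm hL)
          (hP.dotProduct_mulVec_nonneg_of_weightedLaplacian hWs hW hW0)
          (hP.mulVec_weightedLaplacian_mulVec hG hadj hW hW0 hsum) hLv i j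
    _ = μ * (∑ i, ∑ j, effectiveResistance P i j) * (v ⬝ᵥ v) := by
        simp only [← sum_mul]; ring

end Laplacian

theorem lambda2_ge_four_div_sum_edge_resistances_general {n : ℕ}
    (G : SimpleGraph (Fin n)) [DecidableRel G.Adj] (hG : G.Connected)
    (W : Matrix (Fin n) (Fin n) ℝ) (hWsym : Wᵀ = W) (hWnonneg : ∀ i j, 0 ≤ W i j)
    (hWdiag : ∀ i, W i i = 0) (hadj : ∀ i j, G.Adj i j ↔ 0 < W i j)
    (L : Matrix (Fin n) (Fin n) ℝ)
    (hL : L = Matrix.of fun i j => if i = j then ∑ k, W i k else -(W i j))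
    (P : Matrix (Fin n) (Fin n) ℝ) (hP : IsMoorePenrose L P) :
    let R : Fin n → Fin n → ℝ := fun i j =>
      (Pi.single i 1 - Pi.single j 1) ⬝ᵥ (P *ᵥ (Pi.single i 1 - Pi.single j 1))
    let sumEdgeR : ℝ := (1 / 2) * ∑ i, ∑ j, if G.Adj i j then R i j else 0
    ∀ (μ : ℝ) (v : Fin n → ℝ), v ≠ 0 → L *ᵥ v = μ • v → 0 < μ →
      4 / ((n : ℝ) * sumEdgeR) ≤ μ := by
  intro R sumEdgeR μ v hv hLv hμ
  replace hL : L = weightedLaplacian W := hL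
  subst hL
  have hpos (i j : Fin n) (h : G.Adj i j) : 0 < W i j := (hadj i j).1 h
  have hspectral : 2 * n ≤ μ * ∑ i, ∑ j, R i j :=
    hP.two_mul_le_mul_sum_effectiveResistance hWsym hG hpos hWdiag hWnonneg hv hLv hμ.ne'
  have hpaths : ∑ i, ∑ j, R i j ≤ n ^ 2 / 4 * ∑ i, ∑ j, if G.Adj i j then R i j else 0 := by
    simpa only [Fintype.card_fin] using hG.sum_sum_le_card_sq_div_four_mul (r := R)
      (fun i j => hP.dotProduct_mulVec_nonneg_of_weightedLaplacian hWsym hWdiag hWnonneg _)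
      (effectiveResistance_self P) (hP.effectiveResistance_le_add hWsym hG hpos hWdiag hWnonneg)
  have hsumEdgeR : ∑ i, ∑ j, (if G.Adj i j then R i j else 0) = 2 * sumEdgeR := by
    simp only [sumEdgeR]; ring
  have hn : (0 : ℝ) < n := Nat.cast_pos.2 (Function.ne_iff.1 hv).choose.pos
  have h4 : 4 ≤ μ * (n * sumEdgeR) := by
    rw [hsumEdgeR] at hpaths
    refine le_of_mul_le_mul_left ?_ hn
    linarith [mul_le_mul_of_nonneg_left hpaths hμ.le]
  exact (div_le_iff₀ (pos_of_mul_pos_right (by linarith) hμ.le)).2 (by linarith)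

/-- For a connected weighted graph with weighted Laplacian `L`, every positive eigenvalue
`μ` of `L` (in particular `λ₂`) satisfies `μ ≥ 4 / (n · ∑_{edges} R_l)`, where `R_l` is
the effective resistance of edge `l` (the sum over edges equals half the sum over ordered
adjacent pairs). -/
theorem lambda2_ge_four_div_sum_edge_resistances {n : ℕ} (hn : 2 ≤ n)
    (G : SimpleGraph (Fin n)) [DecidableRel G.Adj] (hG : G.Connected)
    (W : Matrix (Fin n) (Fin n) ℝ) (hWsym : Wᵀ = W) (hWnonneg : ∀ i j, 0 ≤ W i j)
    (hWdiag : ∀ i, W i i = 0) (hadj : ∀ i j, G.Adj i j ↔ 0 < W i j)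
    (L : Matrix (Fin n) (Fin n) ℝ)
    (hL : L = Matrix.of fun i j => if i = j then ∑ k, W i k else -(W i j))
    (P : Matrix (Fin n) (Fin n) ℝ) (hP : IsMoorePenrose L P) :
    let R : Fin n → Fin n → ℝ := fun i j =>
      (Pi.single i 1 - Pi.single j 1) ⬝ᵥ (P *ᵥ (Pi.single i 1 - Pi.single j 1))
    let sumEdgeR : ℝ := (1 / 2) * ∑ i, ∑ j, if G.Adj i j then R i j else 0
    ∀ (μ : ℝ) (v : Fin n → ℝ), v ≠ 0 → L *ᵥ v = μ • v → 0 < μ →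
      4 / ((n : ℝ) * sumEdgeR) ≤ μ :=
  lambda2_ge_four_div_sum_edge_resistances_general G hG W hWsym hWnonneg hWdiag hadj L hL P hP
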